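/- arXiv:1907.01270 — 3 statements merged into one kernel-verified Lean document; each statement's English description precedes it below -/
import Mathlib

section
/- For every instance of the rule (□_R^1) of LNS_Kt, i.e., with conclusion G ⇗ Γ ⇒ Δ ↙ Σ ⇒ Π,□A and premisses G ⇗ Γ ⇒ Δ,A ↙ Σ ⇒ Π,□A and G ⇗ Γ ⇒ Δ ↙ Σ ⇒ Π,□A ↗ ε ⇒ A (where G is a possibly empty context, ⇗ stands for either ↗ or ↙, and ε is the empty multiset): if the conclusion is falsifiable, then at least one of the two premisses is falsifiable. -/
/-- Formulae of tense logic: atoms (indexed by naturals), ⊥, →, □, ◇, ■, ◆. -/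
inductive Formula : Type
  | atom : ℕ → Formula
  | bot : Formula
  | imp : Formula → Formula → Formula
  | box : Formula → Formula
  | dia : Formula → Formula
  | bbox : Formula → Formula
  | bdia : Formula → Formula

def Formula.neg (A : Formula) : Formula := A.imp .bot
def Formula.and (A B : Formula) : Formula := (A.imp B.neg).neg
def Formula.or (A B : Formula) : Formula := A.neg.imp B
def Formula.top : Formula := Formula.bot.imp .bot

/-- Formulas built from atoms, ⊥, →, □, ■ only (no diamonds). -/
def Formula.NoDia : Formula → Prop
  | .atom _ => True
  | .bot => True
  | .imp A B => A.NoDia ∧ B.NoDia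
  | .box A => A.NoDia
  | .dia _ => False
  | .bbox A => A.NoDia
  | .bdia _ => False

/-- Structural connectives: `up` is ↗ and `dn` is ↙. -/
inductive Dir : Type
  | up
  | dn

/-- Linear nested sequents: a nonempty list of components `Γ ⇒ Δ`
joined by the structural connectives ↗ (`up`) and ↙ (`dn`). -/
inductive LNS : Type
  | single (Γ Δ : Multiset Formula) : LNS
  | up (Γ Δ : Multiset Formula) (S : LNS) : LNS
  | dn (Γ Δ : Multiset Formula) (S : LNS) : LNS

/-- A (possibly empty) context: a list of components, each together with the
structural connective joining it to what follows. -/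
abbrev Ctx := List (Multiset Formula × Multiset Formula × Dir)

/-- `plug G S` is the linear nested sequent `G ⇗ S` (just `S` when `G` is empty). -/
def plug : Ctx → LNS → LNS
  | [], S => S
  | (Γ, Δ, Dir.up) :: G, S => LNS.up Γ Δ (plug G S)
  | (Γ, Δ, Dir.dn) :: G, S => LNS.dn Γ Δ (plug G S)

/-- The structural connective joining the context to what follows it (none if empty). -/
def lastDir : Ctx → Option Dir
  | [] => none
  | [(_, _, d)] => some d
  | _ :: G => lastDir G

/-- Kripke forcing for tense logic. -/
def Force {W : Type} (R : W → W → Prop) (V : W → ℕ → Prop) : W → Formula → Prop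
  | w, .atom p => V w p
  | _, .bot => False
  | w, .imp A B => Force R V w A → Force R V w B
  | w, .box A => ∀ v, R w v → Force R V v A
  | w, .dia A => ∃ v, R w v ∧ Force R V v A
  | w, .bbox A => ∀ v, R v w → Force R V v A
  | w, .bdia A => ∃ v, R v w ∧ Force R V v A

/-- Conjunction of a finite multiset of formulae (empty conjunction is ⊤). -/
noncomputable def bigAnd (Γ : Multiset Formula) : Formula :=
  Γ.toList.foldr Formula.and Formula.top

/-- Disjunction of a finite multiset of formulae (empty disjunction is ⊥). -/
noncomputable def bigOr (Δ : Multiset Formula) : Formula :=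
  Δ.toList.foldr Formula.or Formula.bot

/-- The formula translation τ of a linear nested sequent. -/
noncomputable def tau : LNS → Formula
  | .single Γ Δ => (bigAnd Γ).imp (bigOr Δ)
  | .up Γ Δ S => (bigAnd Γ).imp ((bigOr Δ).or (tau S).box)
  | .dn Γ Δ S => (bigAnd Γ).imp ((bigOr Δ).or (tau S).bbox)

/-- A formula is valid if it is forced at every world of every Kripke model. -/
def Valid (A : Formula) : Prop :=
  ∀ (W : Type) (_ : Nonempty W) (R : W → W → Prop) (V : W → ℕ → Prop) (w : W),
    Force R V w A

/-- A linear nested sequent is falsifiable if its formula translation fails at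
some world of some Kripke model. -/
def Falsifiable (S : LNS) : Prop :=
  ∃ (W : Type) (_ : Nonempty W) (R : W → W → Prop) (V : W → ℕ → Prop) (w : W),
    ¬ Force R V w (tau S)

/- A world refuting the conclusion has a predecessor `u` refuting `Θ ⇒ Λ,□A`; since `□A` fails
at `u`, some successor of `u` refutes `A`, hence refutes the new component `ε ⇒ A`, so `u` refutes
`Θ ⇒ Λ,□A ↗ ε ⇒ A`. Refutation of the innermost part then propagates outward through any context,
so the second premiss is always falsifiable. -/

section Forcing

variable {W : Type} {R : W → W → Prop} {V : W → ℕ → Prop} {w : W}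

@[simp]
lemma force_or {A B : Formula} : Force R V w (A.or B) ↔ Force R V w A ∨ Force R V w B := by
  simp only [Formula.or, Formula.neg, Force]
  tauto

lemma force_bigAnd_zero : Force R V w (bigAnd 0) := by
  simp [bigAnd, Formula.top, Force]

lemma force_bigOr {Δ : Multiset Formula} : Force R V w (bigOr Δ) ↔ ∃ B ∈ Δ, Force R V w B := by
  suffices ∀ l : List Formula, Force R V w (l.foldr Formula.or .bot) ↔ ∃ B ∈ l, Force R V w B by
    simpa [bigOr] using this Δ.toList
  intro l
  induction l with
  | nil => simp [Force]
  | cons B l ih => simp [ih]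

@[simp]
lemma not_force_tau_single {Γ Δ : Multiset Formula} :
    ¬ Force R V w (tau (.single Γ Δ)) ↔ Force R V w (bigAnd Γ) ∧ ¬ Force R V w (bigOr Δ) := by
  simp [tau, Force]

@[simp]
lemma not_force_tau_up {Γ Δ : Multiset Formula} {S : LNS} :
    ¬ Force R V w (tau (.up Γ Δ S)) ↔
      Force R V w (bigAnd Γ) ∧ ¬ Force R V w (bigOr Δ) ∧ ∃ v, R w v ∧ ¬ Force R V v (tau S) := by
  simp [tau, Force]

@[simp]
lemma not_force_tau_dn {Γ Δ : Multiset Formula} {S : LNS} :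
    ¬ Force R V w (tau (.dn Γ Δ S)) ↔
      Force R V w (bigAnd Γ) ∧ ¬ Force R V w (bigOr Δ) ∧ ∃ v, R v w ∧ ¬ Force R V v (tau S) := by
  simp [tau, Force]

lemma not_force_tau_plug {S S' : LNS}
    (h : ∀ u, ¬ Force R V u (tau S) → ¬ Force R V u (tau S')) (G : Ctx) :
    ¬ Force R V w (tau (plug G S)) → ¬ Force R V w (tau (plug G S')) := by
  induction G generalizing w with
  | nil => exact h w
  | cons C G ih =>
    obtain ⟨Γ, Δ, _ | _⟩ := C <;>
    · simp only [plug, not_force_tau_up, not_force_tau_dn]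
      rintro ⟨hΓ, hΔ, v, hv, hS⟩
      exact ⟨hΓ, hΔ, v, hv, ih hS⟩

lemma not_force_tau_up_empty_of_box_mem {Θ Λ : Multiset Formula} {A : Formula}
    (hA : A.box ∈ Λ) (hw : ¬ Force R V w (tau (.single Θ Λ))) :
    ¬ Force R V w (tau (.up Θ Λ (.single 0 {A}))) := by
  rw [not_force_tau_single] at hw
  obtain ⟨hΘ, hΛ⟩ := hw
  obtain ⟨v, hwv, hvA⟩ : ∃ v, R w v ∧ ¬ Force R V v A := by
    by_contra! hbox
    exact hΛ (force_bigOr.2 ⟨A.box, hA, hbox⟩)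
  rw [not_force_tau_up]
  exact ⟨hΘ, hΛ, v, hwv, by simpa [force_bigAnd_zero, force_bigOr] using hvA⟩

end Forcing

lemma plug_append (G H : Ctx) (S : LNS) : plug (G ++ H) S = plug G (plug H S) := by
  induction G with
  | nil => rfl
  | cons C G ih => obtain ⟨Γ, Δ, _ | _⟩ := C <;> simp [plug, ih]

lemma Falsifiable.plug_of_not_force {S S' : LNS}
    (h : ∀ (W : Type) (R : W → W → Prop) (V : W → ℕ → Prop) (w : W),
      ¬ Force R V w (tau S) → ¬ Force R V w (tau S'))
    {G : Ctx} (hS : Falsifiable (plug G S)) : Falsifiable (plug G S') := by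
  obtain ⟨W, hW, R, V, w, hw⟩ := hS
  exact ⟨W, hW, R, V, w, not_force_tau_plug (h W R V) G hw⟩

/-- Soundness of the rule (□_R^1): if the conclusion
`G ⇗ Γ ⇒ Δ ↙ Θ ⇒ Λ,□A` is falsifiable, then one of the premisses
`G ⇗ Γ ⇒ Δ,A ↙ Θ ⇒ Λ,□A` and `G ⇗ Γ ⇒ Δ ↙ Θ ⇒ Λ,□A ↗ ε ⇒ A` is falsifiable. -/
theorem boxR1_sound (G : Ctx) (Γ Δ Θ Λ : Multiset Formula) (A : Formula)
    (h : Falsifiable (plug G (.dn Γ Δ (.single Θ (A.box ::ₘ Λ))))) :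
    Falsifiable (plug G (.dn Γ (A ::ₘ Δ) (.single Θ (A.box ::ₘ Λ)))) ∨
      Falsifiable (plug G (.dn Γ Δ (.up Θ (A.box ::ₘ Λ) (.single 0 {A})))) := by
  right
  have hG : ∀ S, plug G (.dn Γ Δ S) = plug (G ++ [(Γ, Δ, .dn)]) S := fun S => by
    rw [plug_append]; rfl
  rw [hG] at h ⊢
  exact h.plug_of_not_force fun _ _ _ _ =>
    not_force_tau_up_empty_of_box_mem (Multiset.mem_cons_self _ _)
end

section
/- (Cut-free completeness of LNS_Kt*) For every formula φ built from atoms, ⊥, →, □, ■: if φ is valid (forced at every world of every Kripke model), then the linear nested sequent ε ⇒ φ is derivable in LNS_Kt*. -/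
/-- The simplified calculus LNS_Kt*. -/
inductive DerivStar : LNS → Prop
  | id (G : Ctx) (Γ Δ : Multiset Formula) (p : ℕ) :
      DerivStar (plug G (.single (.atom p ::ₘ Γ) (.atom p ::ₘ Δ)))
  | botL (G : Ctx) (Γ Δ : Multiset Formula) :
      DerivStar (plug G (.single (.bot ::ₘ Γ) Δ))
  | ew (G : Ctx) (Θ Λ : Multiset Formula) (d : Dir) (Γ Δ : Multiset Formula) :
      DerivStar (plug G (.single Θ Λ)) →
      DerivStar (plug (G ++ [(Θ, Λ, d)]) (.single Γ Δ))
  | impR (G : Ctx) (Γ Δ : Multiset Formula) (A B : Formula) :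
      DerivStar (plug G (.single (A ::ₘ Γ) (B ::ₘ A.imp B ::ₘ Δ))) →
      DerivStar (plug G (.single Γ (A.imp B ::ₘ Δ)))
  | impL (G : Ctx) (Γ Δ : Multiset Formula) (A B : Formula) :
      DerivStar (plug G (.single (B ::ₘ A.imp B ::ₘ Γ) Δ)) →
      DerivStar (plug G (.single (A.imp B ::ₘ Γ) (A ::ₘ Δ))) →
      DerivStar (plug G (.single (A.imp B ::ₘ Γ) Δ))
  | boxR (G : Ctx) (Γ Δ : Multiset Formula) (A : Formula) :
      DerivStar (plug G (.up Γ (A.box ::ₘ Δ) (.single 0 {A}))) →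
      DerivStar (plug G (.single Γ (A.box ::ₘ Δ)))
  | bboxR (G : Ctx) (Γ Δ : Multiset Formula) (A : Formula) :
      DerivStar (plug G (.dn Γ (A.bbox ::ₘ Δ) (.single 0 {A}))) →
      DerivStar (plug G (.single Γ (A.bbox ::ₘ Δ)))
  | boxL1 (G : Ctx) (Γ Δ Θ Λ : Multiset Formula) (A : Formula) :
      DerivStar (plug G (.up (A.box ::ₘ Γ) Δ (.single (A ::ₘ Θ) Λ))) →
      DerivStar (plug G (.up (A.box ::ₘ Γ) Δ (.single Θ Λ)))
  | bboxL1 (G : Ctx) (Γ Δ Θ Λ : Multiset Formula) (A : Formula) :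
      DerivStar (plug G (.dn (A.bbox ::ₘ Γ) Δ (.single (A ::ₘ Θ) Λ))) →
      DerivStar (plug G (.dn (A.bbox ::ₘ Γ) Δ (.single Θ Λ)))
  | boxL2 (G : Ctx) (Γ Δ Θ Λ : Multiset Formula) (A : Formula) :
      DerivStar (plug G (.single (A ::ₘ Γ) Δ)) →
      DerivStar (plug G (.dn Γ Δ (.single (A.box ::ₘ Θ) Λ)))
  | bboxL2 (G : Ctx) (Γ Δ Θ Λ : Multiset Formula) (A : Formula) :
      DerivStar (plug G (.single (A ::ₘ Γ) Δ)) →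
      DerivStar (plug G (.up Γ Δ (.single (A.bbox ::ₘ Θ) Λ)))

/-!
Proof search, read contrapositively. An underivable component is saturated under the
propositional rules; for each `□A` (`■A`) on its right a `↗`-child (`↙`-child) `Σ ⇒ A` is
opened, `Σ` collecting the bodies of the boxes (black boxes) on the parent's left, and the search
recurses into it at smaller modal depth. If the saturated child contains `■B` (`□B`) with `B`
missing from the parent, rule `■_L^2` (`□_L^2`) lets us add `B` to the parent and restart there;
this happens at most as often as there are subformulas, which gives the lexicographic termination
measure (modal depth, missing subformulas). What the search produces is a Hintikka set of
components; relating any two components `c, c'` such that the boxes of `c` and the black boxes of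
`c'` are respected across them gives a Kripke model in which each component forces its left side
and refutes its right side.
-/

deriving instance DecidableEq for Formula

namespace Formula

def modalDepth : Formula → ℕ
  | atom _ => 0
  | bot => 0
  | imp A B => max A.modalDepth B.modalDepth
  | box A | dia A | bbox A | bdia A => A.modalDepth + 1

def subformulas : Formula → Finset Formula
  | atom p => {atom p}
  | bot => {bot}
  | imp A B => insert (imp A B) (A.subformulas ∪ B.subformulas)
  | box A => insert (box A) A.subformulas
  | dia A => insert (dia A) A.subformulas
  | bbox A => insert (bbox A) A.subformulas
  | bdia A => insert (bdia A) A.subformulas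

lemma mem_subformulas_self (A : Formula) : A ∈ A.subformulas := by
  cases A <;> simp [subformulas]

end Formula

namespace Dir

def flip : Dir → Dir
  | up => dn
  | dn => up

/-- The box looking along an edge of direction `d`: `□` for `↗`, `■` for `↙`. -/
def box : Dir → Formula → Formula
  | up => Formula.box
  | dn => Formula.bbox

def unbox : Dir → Formula → Option Formula
  | up, .box A => some A
  | dn, .bbox A => some A
  | _, _ => none

lemma unbox_eq_some {d : Dir} {F A : Formula} : d.unbox F = some A ↔ F = d.box A := by
  cases d <;> cases F <;> simp [unbox, box, eq_comm]

def bodies (d : Dir) (Γ : Multiset Formula) : Multiset Formula :=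
  Γ.filterMap d.unbox

lemma mem_bodies {d : Dir} {Γ : Multiset Formula} {A : Formula} :
    A ∈ d.bodies Γ ↔ d.box A ∈ Γ := by
  simp [bodies, Multiset.mem_filterMap, unbox_eq_some]

lemma modalDepth_box (d : Dir) (A : Formula) : (d.box A).modalDepth = A.modalDepth + 1 := by
  cases d <;> rfl

end Dir

structure SubformulaClosed (S : Finset Formula) : Prop where
  imp_left : ∀ {A B : Formula}, A.imp B ∈ S → A ∈ S
  imp_right : ∀ {A B : Formula}, A.imp B ∈ S → B ∈ S
  box : ∀ {d : Dir} {A : Formula}, d.box A ∈ S → A ∈ S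

lemma Formula.subformulaClosed_subformulas (φ : Formula) : SubformulaClosed φ.subformulas where
  imp_left {A B} h := by
    induction φ <;> grind [Formula.subformulas, Formula.mem_subformulas_self]
  imp_right {A B} h := by
    induction φ <;> grind [Formula.subformulas, Formula.mem_subformulas_self]
  box {d A} h := by
    cases d <;> simp only [Dir.box] at h <;>
      induction φ <;> grind [Formula.subformulas, Formula.mem_subformulas_self]

namespace DerivStar

variable {G : Ctx} {Γ Δ Θ Λ : Multiset Formula}

lemma of_bot_mem (h : Formula.bot ∈ Γ) : DerivStar (plug G (.single Γ Δ)) := by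
  simpa [Multiset.cons_erase h] using botL G (Γ.erase .bot) Δ

lemma of_atom_mem {p : ℕ} (hΓ : .atom p ∈ Γ) (hΔ : .atom p ∈ Δ) :
    DerivStar (plug G (.single Γ Δ)) := by
  simpa [Multiset.cons_erase hΓ, Multiset.cons_erase hΔ] using
    id G (Γ.erase (.atom p)) (Δ.erase (.atom p)) p

lemma impL_of_mem {A B : Formula} (h : A.imp B ∈ Γ)
    (hB : DerivStar (plug G (.single (B ::ₘ Γ) Δ)))
    (hA : DerivStar (plug G (.single Γ (A ::ₘ Δ)))) :
    DerivStar (plug G (.single Γ Δ)) := by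
  rw [← Multiset.cons_erase h] at hB hA ⊢
  exact impL G _ Δ A B hB hA

lemma impR_of_mem {A B : Formula} (h : A.imp B ∈ Δ)
    (hAB : DerivStar (plug G (.single (A ::ₘ Γ) (B ::ₘ Δ)))) :
    DerivStar (plug G (.single Γ Δ)) := by
  rw [← Multiset.cons_erase h] at hAB ⊢
  exact impR G Γ _ A B hAB

lemma boxL1_of_mem {d : Dir} {A : Formula} (h : d.box A ∈ Γ)
    (hA : DerivStar (plug (G ++ [(Γ, Δ, d)]) (.single (A ::ₘ Θ) Λ))) :
    DerivStar (plug (G ++ [(Γ, Δ, d)]) (.single Θ Λ)) := by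
  rw [← Multiset.cons_erase h, plug_append] at hA ⊢
  cases d
  · exact boxL1 G _ Δ Θ Λ A hA
  · exact bboxL1 G _ Δ Θ Λ A hA

lemma of_add_bodies {d : Dir}
    (h : DerivStar (plug (G ++ [(Γ, Δ, d)]) (.single (d.bodies Γ + Θ) Λ))) :
    DerivStar (plug (G ++ [(Γ, Δ, d)]) (.single Θ Λ)) := by
  suffices ∀ m : Multiset Formula, (∀ A ∈ m, d.box A ∈ Γ) →
      DerivStar (plug (G ++ [(Γ, Δ, d)]) (.single (m + Θ) Λ)) →
      DerivStar (plug (G ++ [(Γ, Δ, d)]) (.single Θ Λ)) from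
    this _ (fun _ => Dir.mem_bodies.mp) h
  intro m
  induction m using Multiset.induction_on with
  | empty => simp
  | cons A m ih =>
    intro hm hd
    refine ih (fun B hB => hm B (Multiset.mem_cons_of_mem hB)) ?_
    exact boxL1_of_mem (hm A (Multiset.mem_cons_self A m)) (by simpa using hd)

lemma boxR_of_mem {d : Dir} {A : Formula} (h : d.box A ∈ Δ)
    (hA : DerivStar (plug (G ++ [(Γ, Δ, d)]) (.single (d.bodies Γ) {A}))) :
    DerivStar (plug G (.single Γ Δ)) := by
  have hA' := of_add_bodies (Θ := 0) (by simpa using hA)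
  rw [plug_append, ← Multiset.cons_erase h] at hA'
  rw [← Multiset.cons_erase h]
  cases d
  · exact boxR G Γ _ A hA'
  · exact bboxR G Γ _ A hA'

lemma boxL2_of_mem {d : Dir} {A : Formula} (h : d.flip.box A ∈ Θ)
    (hA : DerivStar (plug G (.single (A ::ₘ Γ) Δ))) :
    DerivStar (plug (G ++ [(Γ, Δ, d)]) (.single Θ Λ)) := by
  rw [← Multiset.cons_erase h, plug_append]
  cases d
  · exact bboxL2 G Γ Δ _ Λ A hA
  · exact boxL2 G Γ Δ _ Λ A hA

end DerivStar

structure Saturated (Γ Δ : Multiset Formula) : Prop where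
  bot_not_mem : Formula.bot ∉ Γ
  atom_not_mem : ∀ p : ℕ, .atom p ∈ Γ → .atom p ∉ Δ
  imp_left : ∀ A B : Formula, A.imp B ∈ Γ → B ∈ Γ ∨ A ∈ Δ
  imp_right : ∀ A B : Formula, A.imp B ∈ Δ → A ∈ Γ ∧ B ∈ Δ

def Linked (d : Dir) (c c' : Multiset Formula × Multiset Formula) : Prop :=
  (∀ A, d.box A ∈ c.1 → A ∈ c'.1) ∧ ∀ A, d.flip.box A ∈ c'.1 → A ∈ c.1

lemma linked_dn_iff {c c' : Multiset Formula × Multiset Formula} :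
    Linked .dn c c' ↔ Linked .up c' c :=
  And.comm

def IsHintikka (S : Set (Multiset Formula × Multiset Formula)) : Prop :=
  ∀ c ∈ S, Saturated c.1 c.2 ∧
    ∀ (d : Dir) (A : Formula), d.box A ∈ c.2 → ∃ c' ∈ S, Linked d c c' ∧ A ∈ c'.2

namespace IsHintikka

variable {S : Set (Multiset Formula × Multiset Formula)}

lemma iUnion {ι : Sort*} {S : ι → Set (Multiset Formula × Multiset Formula)}
    (h : ∀ i, IsHintikka (S i)) : IsHintikka (⋃ i, S i) := by
  intro c hc
  obtain ⟨i, hi⟩ := Set.mem_iUnion.mp hc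
  refine ⟨(h i c hi).1, fun d A hA => ?_⟩
  obtain ⟨c', hc', hlink⟩ := (h i c hi).2 d A hA
  exact ⟨c', Set.mem_iUnion.mpr ⟨i, hc'⟩, hlink⟩

lemma insert (hS : IsHintikka S) {c : Multiset Formula × Multiset Formula}
    (hc : Saturated c.1 c.2)
    (hwit : ∀ (d : Dir) (A : Formula), d.box A ∈ c.2 → ∃ c' ∈ S, Linked d c c' ∧ A ∈ c'.2) :
    IsHintikka (insert c S) := by
  rintro c₁ (rfl | hc₁)
  · exact ⟨hc, fun d A hA => (hwit d A hA).imp fun _ h => ⟨Set.mem_insert_of_mem _ h.1, h.2⟩⟩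
  · refine ⟨(hS c₁ hc₁).1, fun d A hA => ?_⟩
    exact ((hS c₁ hc₁).2 d A hA).imp fun _ h => ⟨Set.mem_insert_of_mem _ h.1, h.2⟩

def rel (c c' : S) : Prop := Linked .up c c'

def val (c : S) (p : ℕ) : Prop := .atom p ∈ c.1.1

theorem truth_lemma (hS : IsHintikka S) (A : Formula) (hA : A.NoDia) (c : S) :
    (A ∈ c.1.1 → Force rel val c A) ∧ (A ∈ c.1.2 → ¬ Force rel val c A) := by
  induction A generalizing c with
  | atom p => exact ⟨id, fun hΔ hΓ => (hS c c.2).1.atom_not_mem p hΓ hΔ⟩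
  | bot => exact ⟨fun h => absurd h (hS c c.2).1.bot_not_mem, fun _ h => h⟩
  | imp A B ihA ihB =>
    replace ihA := ihA hA.1 c
    replace ihB := ihB hA.2 c
    refine ⟨fun h hfA => ?_, fun h hf => ?_⟩
    · exact ((hS c c.2).1.imp_left A B h).elim ihB.1 fun hAΔ => absurd hfA (ihA.2 hAΔ)
    · obtain ⟨hAΓ, hBΔ⟩ := (hS c c.2).1.imp_right A B h
      exact ihB.2 hBΔ (hf (ihA.1 hAΓ))
  | box A ih =>
    refine ⟨fun h c' hcc' => (ih hA c').1 (hcc'.1 A h), fun h hf => ?_⟩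
    obtain ⟨c', hc', hcc', hAc'⟩ := (hS c c.2).2 .up A h
    exact (ih hA ⟨c', hc'⟩).2 hAc' (hf ⟨c', hc'⟩ hcc')
  | bbox A ih =>
    refine ⟨fun h c' hc'c => (ih hA c').1 (hc'c.2 A h), fun h hf => ?_⟩
    obtain ⟨c', hc', hcc', hAc'⟩ := (hS c c.2).2 .dn A h
    exact (ih hA ⟨c', hc'⟩).2 hAc' (hf ⟨c', hc'⟩ (linked_dn_iff.mp hcc'))
  | dia => exact hA.elim
  | bdia => exact hA.elim

theorem not_valid (hS : IsHintikka S) {c : Multiset Formula × Multiset Formula} (hc : c ∈ S)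
    {φ : Formula} (hφ : φ.NoDia) (hφc : φ ∈ c.2) : ¬ Valid φ := fun hv =>
  (hS.truth_lemma φ hφ ⟨c, hc⟩).2 hφc (hv S ⟨⟨c, hc⟩⟩ rel val ⟨c, hc⟩)

end IsHintikka

def upToDepth (S₀ : Finset Formula) (n : ℕ) : Finset Formula :=
  S₀.filter (·.modalDepth ≤ n)

namespace SubformulaClosed

variable {S₀ : Finset Formula}

lemma upToDepth (hS₀ : SubformulaClosed S₀) (n : ℕ) : SubformulaClosed (_root_.upToDepth S₀ n) where
  imp_left h := by
    simp only [_root_.upToDepth, Finset.mem_filter, Formula.modalDepth] at h ⊢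
    exact ⟨hS₀.imp_left h.1, le_of_max_le_left h.2⟩
  imp_right h := by
    simp only [_root_.upToDepth, Finset.mem_filter, Formula.modalDepth] at h ⊢
    exact ⟨hS₀.imp_right h.1, le_of_max_le_right h.2⟩
  box h := by
    simp only [_root_.upToDepth, Finset.mem_filter, Dir.modalDepth_box] at h ⊢
    exact ⟨hS₀.box h.1, by omega⟩

lemma mem_upToDepth_of_box_mem (hS₀ : SubformulaClosed S₀) {n : ℕ} {d : Dir} {A : Formula}
    (h : d.box A ∈ _root_.upToDepth S₀ (n + 1)) : A ∈ _root_.upToDepth S₀ n := by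
  simp only [_root_.upToDepth, Finset.mem_filter, Dir.modalDepth_box] at h ⊢
  exact ⟨hS₀.box h.1, by omega⟩

end SubformulaClosed

lemma upToDepth_subset_succ (S₀ : Finset Formula) (n : ℕ) :
    upToDepth S₀ n ⊆ upToDepth S₀ (n + 1) := by
  intro A
  simp only [upToDepth, Finset.mem_filter]
  exact And.imp_right Nat.le_succ_of_le

lemma box_not_mem_upToDepth_zero (S₀ : Finset Formula) (d : Dir) (A : Formula) :
    d.box A ∉ upToDepth S₀ 0 := by
  simp [upToDepth, Dir.modalDepth_box]

section Search

variable {T : Finset Formula} {G : Ctx} {Γ Δ : Multiset Formula}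

def missing (T : Finset Formula) (Γ Δ : Multiset Formula) : ℕ :=
  (T \ Γ.toFinset).card + (T \ Δ.toFinset).card

lemma card_sdiff_toFinset_cons_le (A : Formula) :
    (T \ (A ::ₘ Γ).toFinset).card ≤ (T \ Γ.toFinset).card := by
  rw [Multiset.toFinset_cons, Finset.sdiff_insert]
  exact Finset.card_erase_le

lemma card_sdiff_toFinset_cons_lt {A : Formula} (hA : A ∈ T) (hAΓ : A ∉ Γ) :
    (T \ (A ::ₘ Γ).toFinset).card < (T \ Γ.toFinset).card := by
  rw [Multiset.toFinset_cons, Finset.sdiff_insert]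
  exact Finset.card_erase_lt_of_mem (Finset.mem_sdiff.mpr ⟨hA, by simpa using hAΓ⟩)

lemma missing_cons_left_lt {A : Formula} (hA : A ∈ T) (hAΓ : A ∉ Γ) :
    missing T (A ::ₘ Γ) Δ < missing T Γ Δ :=
  Nat.add_lt_add_right (card_sdiff_toFinset_cons_lt hA hAΓ) _

lemma missing_cons_right_lt {A : Formula} (hA : A ∈ T) (hAΔ : A ∉ Δ) :
    missing T Γ (A ::ₘ Δ) < missing T Γ Δ :=
  Nat.add_lt_add_left (card_sdiff_toFinset_cons_lt hA hAΔ) _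

lemma missing_cons_cons_lt {A B : Formula} (hA : A ∈ T) (hB : B ∈ T) (h : A ∉ Γ ∨ B ∉ Δ) :
    missing T (A ::ₘ Γ) (B ::ₘ Δ) < missing T Γ Δ := by
  rcases h with h | h
  · exact Nat.add_lt_add_of_lt_of_le (card_sdiff_toFinset_cons_lt hA h)
      (card_sdiff_toFinset_cons_le B)
  · exact Nat.add_lt_add_of_le_of_lt (card_sdiff_toFinset_cons_le A)
      (card_sdiff_toFinset_cons_lt hB h)

lemma toFinset_cons_subset {A : Formula} (hA : A ∈ T) (hΓ : Γ.toFinset ⊆ T) :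
    (A ::ₘ Γ).toFinset ⊆ T := by
  rw [Multiset.toFinset_cons]
  exact Finset.insert_subset hA hΓ

def Grows (T : Finset Formula) (G : Ctx) (Γ Δ : Multiset Formula) : Prop :=
  ∃ Γ₁ Δ₁, Γ ⊆ Γ₁ ∧ Δ ⊆ Δ₁ ∧ Γ₁.toFinset ⊆ T ∧ Δ₁.toFinset ⊆ T ∧
    missing T Γ₁ Δ₁ < missing T Γ Δ ∧ ¬ DerivStar (plug G (.single Γ₁ Δ₁))

def HasHintikkaExtension (T : Finset Formula) (G : Ctx) (Γ Δ : Multiset Formula) : Prop :=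
  ∃ S, IsHintikka S ∧ ∃ c ∈ S, Γ ⊆ c.1 ∧ Δ ⊆ c.2 ∧ c.1.toFinset ⊆ T ∧
    ¬ DerivStar (plug G (.single c.1 c.2))

lemma HasHintikkaExtension.mono {Γ₁ Δ₁ : Multiset Formula} (h : HasHintikkaExtension T G Γ₁ Δ₁)
    (hΓ : Γ ⊆ Γ₁) (hΔ : Δ ⊆ Δ₁) : HasHintikkaExtension T G Γ Δ := by
  obtain ⟨S, hS, c, hc, hΓ₁, hΔ₁, hT, hD⟩ := h
  exact ⟨S, hS, c, hc, Multiset.Subset.trans hΓ hΓ₁, Multiset.Subset.trans hΔ hΔ₁, hT, hD⟩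

lemma saturated_or_grows (hT : SubformulaClosed T) (hΓ : Γ.toFinset ⊆ T) (hΔ : Δ.toFinset ⊆ T)
    (hD : ¬ DerivStar (plug G (.single Γ Δ))) : Saturated Γ Δ ∨ Grows T G Γ Δ := by
  by_cases hg : Grows T G Γ Δ
  · exact .inr hg
  refine .inl ⟨fun h => hD (.of_bot_mem h), fun p hΓp hΔp => hD (.of_atom_mem hΓp hΔp), ?_, ?_⟩
  · intro A B hAB
    have hABT := hΓ (Multiset.mem_toFinset.mpr hAB)
    by_contra! hn
    rcases not_and_or.mp fun h => hD (DerivStar.impL_of_mem hAB h.1 h.2) with hB | hA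
    · exact hg ⟨B ::ₘ Γ, Δ, Multiset.subset_cons _ _, Multiset.Subset.refl _,
        toFinset_cons_subset (hT.imp_right hABT) hΓ, hΔ,
        missing_cons_left_lt (hT.imp_right hABT) hn.1, hB⟩
    · exact hg ⟨Γ, A ::ₘ Δ, Multiset.Subset.refl _, Multiset.subset_cons _ _, hΓ,
        toFinset_cons_subset (hT.imp_left hABT) hΔ,
        missing_cons_right_lt (hT.imp_left hABT) hn.2, hA⟩
  · intro A B hAB
    have hABT := hΔ (Multiset.mem_toFinset.mpr hAB)
    by_contra hn
    exact hg ⟨A ::ₘ Γ, B ::ₘ Δ, Multiset.subset_cons _ _, Multiset.subset_cons _ _,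
      toFinset_cons_subset (hT.imp_left hABT) hΓ, toFinset_cons_subset (hT.imp_right hABT) hΔ,
      missing_cons_cons_lt (hT.imp_left hABT) (hT.imp_right hABT) (not_and_or.mp hn),
      fun h => hD (DerivStar.impR_of_mem hAB h)⟩

lemma hasHintikkaExtension_of_saturated (hsat : Saturated Γ Δ) (hΓ : Γ.toFinset ⊆ T)
    (hD : ¬ DerivStar (plug G (.single Γ Δ)))
    (hwit : ∀ (d : Dir) (A : Formula), d.box A ∈ Δ →
      ∃ S, IsHintikka S ∧ ∃ c ∈ S, Linked d (Γ, Δ) c ∧ A ∈ c.2) :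
    HasHintikkaExtension T G Γ Δ := by
  choose S hS c hc hlink using hwit
  have hU : IsHintikka (⋃ d, ⋃ A, ⋃ h, S d A h) :=
    .iUnion fun d => .iUnion fun A => .iUnion fun h => hS d A h
  refine ⟨_, hU.insert hsat fun d A h => ⟨c d A h, ?_, hlink d A h⟩, (Γ, Δ),
    Set.mem_insert _ _, Multiset.Subset.refl _, Multiset.Subset.refl _, hΓ, hD⟩
  exact Set.mem_iUnion.mpr ⟨d, Set.mem_iUnion.mpr ⟨A, Set.mem_iUnion.mpr ⟨h, hc d A h⟩⟩⟩

lemma grows_or_hasHintikkaExtension (hT : SubformulaClosed T) (hΓ : Γ.toFinset ⊆ T)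
    (hΔ : Δ.toFinset ⊆ T) (hD : ¬ DerivStar (plug G (.single Γ Δ)))
    (hchild : ∀ (d : Dir) (A : Formula), d.box A ∈ Δ → Grows T G Γ Δ ∨
      ∃ S, IsHintikka S ∧ ∃ c ∈ S, Linked d (Γ, Δ) c ∧ A ∈ c.2) :
    Grows T G Γ Δ ∨ HasHintikkaExtension T G Γ Δ := by
  by_cases hg : Grows T G Γ Δ
  · exact .inl hg
  · exact .inr <| hasHintikkaExtension_of_saturated
      ((saturated_or_grows hT hΓ hΔ hD).resolve_right hg) hΓ hD
      fun d A hA => (hchild d A hA).resolve_left hg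

lemma hasHintikkaExtension_of_forall_grows_or
    (step : ∀ Γ Δ : Multiset Formula, Γ.toFinset ⊆ T → Δ.toFinset ⊆ T →
      ¬ DerivStar (plug G (.single Γ Δ)) → Grows T G Γ Δ ∨ HasHintikkaExtension T G Γ Δ)
    (hΓ : Γ.toFinset ⊆ T) (hΔ : Δ.toFinset ⊆ T) (hD : ¬ DerivStar (plug G (.single Γ Δ))) :
    HasHintikkaExtension T G Γ Δ := by
  induction hm : missing T Γ Δ using Nat.strong_induction_on generalizing Γ Δ with
  | _ m ih =>
    rcases step Γ Δ hΓ hΔ hD with ⟨Γ₁, Δ₁, hΓΓ₁, hΔΔ₁, hΓ₁, hΔ₁, hlt, hD₁⟩ | hext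
    · exact (ih _ (hm ▸ hlt) hΓ₁ hΔ₁ hD₁ rfl).mono hΓΓ₁ hΔΔ₁
    · exact hext

end Search

section Children

variable {S₀ : Finset Formula} {n : ℕ} {G : Ctx} {Γ Δ : Multiset Formula}

lemma grows_or_linked_child (hS₀ : SubformulaClosed S₀)
    (ih : ∀ (G' : Ctx) (Γ' Δ' : Multiset Formula), Γ'.toFinset ⊆ upToDepth S₀ n →
      Δ'.toFinset ⊆ upToDepth S₀ n → ¬ DerivStar (plug G' (.single Γ' Δ')) →
      HasHintikkaExtension (upToDepth S₀ n) G' Γ' Δ')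
    (hΓ : Γ.toFinset ⊆ upToDepth S₀ (n + 1)) (hΔ : Δ.toFinset ⊆ upToDepth S₀ (n + 1))
    (hD : ¬ DerivStar (plug G (.single Γ Δ))) {d : Dir} {A : Formula} (hA : d.box A ∈ Δ) :
    Grows (upToDepth S₀ (n + 1)) G Γ Δ ∨
      ∃ S, IsHintikka S ∧ ∃ c ∈ S, Linked d (Γ, Δ) c ∧ A ∈ c.2 := by
  have hbodies : (d.bodies Γ).toFinset ⊆ upToDepth S₀ n := fun B hB =>
    hS₀.mem_upToDepth_of_box_mem (hΓ (by simpa [Dir.mem_bodies] using hB))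
  have hAT : ({A} : Multiset Formula).toFinset ⊆ upToDepth S₀ n := by
    simpa using hS₀.mem_upToDepth_of_box_mem (hΔ (Multiset.mem_toFinset.mpr hA))
  obtain ⟨S, hS, c, hc, hΓc, hAc, hcT, hDc⟩ :=
    ih _ _ _ hbodies hAT fun h => hD (DerivStar.boxR_of_mem hA h)
  by_cases hback : ∃ B, d.flip.box B ∈ c.1 ∧ B ∉ Γ
  · obtain ⟨B, hBc, hBΓ⟩ := hback
    have hBT : B ∈ upToDepth S₀ (n + 1) :=
      upToDepth_subset_succ S₀ n ((hS₀.upToDepth n).box (hcT (Multiset.mem_toFinset.mpr hBc)))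
    exact .inl ⟨B ::ₘ Γ, Δ, Multiset.subset_cons _ _, Multiset.Subset.refl _,
      toFinset_cons_subset hBT hΓ, hΔ, missing_cons_left_lt hBT hBΓ,
      fun h => hDc (DerivStar.boxL2_of_mem hBc h)⟩
  · push Not at hback
    exact .inr ⟨S, hS, c, hc, ⟨fun B hB => hΓc (Dir.mem_bodies.mpr hB), hback⟩,
      hAc (Multiset.mem_singleton_self A)⟩

theorem hasHintikkaExtension (hS₀ : SubformulaClosed S₀) (n : ℕ) (G : Ctx)
    (Γ Δ : Multiset Formula) (hΓ : Γ.toFinset ⊆ upToDepth S₀ n)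
    (hΔ : Δ.toFinset ⊆ upToDepth S₀ n) (hD : ¬ DerivStar (plug G (.single Γ Δ))) :
    HasHintikkaExtension (upToDepth S₀ n) G Γ Δ := by
  induction n generalizing G Γ Δ with
  | zero =>
    refine hasHintikkaExtension_of_forall_grows_or (fun Γ Δ hΓ hΔ hD => ?_) hΓ hΔ hD
    refine grows_or_hasHintikkaExtension (hS₀.upToDepth 0) hΓ hΔ hD fun d A hA => ?_
    exact absurd (hΔ (Multiset.mem_toFinset.mpr hA)) (box_not_mem_upToDepth_zero S₀ d A)
  | succ n ih =>
    refine hasHintikkaExtension_of_forall_grows_or (fun Γ Δ hΓ hΔ hD => ?_) hΓ hΔ hD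
    exact grows_or_hasHintikkaExtension (hS₀.upToDepth (n + 1)) hΓ hΔ hD
      fun d A hA => grows_or_linked_child hS₀ ih hΓ hΔ hD hA

end Children

/-- Cut-free completeness of LNS_Kt*: every valid formula built from atoms, ⊥,
→, □, ■ is derivable in LNS_Kt*. -/
theorem lnskt_star_complete (φ : Formula) (hφ : φ.NoDia) (hv : Valid φ) :
    DerivStar (LNS.single 0 {φ}) := by
  by_contra hD
  have hφT : φ ∈ upToDepth φ.subformulas φ.modalDepth :=
    Finset.mem_filter.mpr ⟨φ.mem_subformulas_self, le_rfl⟩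
  obtain ⟨S, hS, c, hc, -, hφc, -, -⟩ :=
    hasHintikkaExtension φ.subformulaClosed_subformulas φ.modalDepth [] 0 {φ}
      (by simp) (by simpa using hφT) hD
  exact hS.not_valid hc hφ (hφc (Multiset.mem_singleton_self φ)) hv
end

section
/- (Admissibility of internal weakening in LNS_Kt) For all multisets Γ, Δ, Σ, Π and all (possibly empty) contexts G, H: if G ⇗ Γ ⇒ Δ ⇗ H is derivable in LNS_Kt, then G ⇗ Γ,Σ ⇒ Δ,Π ⇗ H is derivable in LNS_Kt (with the same structural connectives ⇗ ∈ {↗,↙} in both sequents). -/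
/-- The calculus LNS_Kt. -/
inductive Deriv : LNS → Prop
  | id (G : Ctx) (Γ Δ : Multiset Formula) (p : ℕ) :
      Deriv (plug G (.single (.atom p ::ₘ Γ) (.atom p ::ₘ Δ)))
  | botL (G : Ctx) (Γ Δ : Multiset Formula) :
      Deriv (plug G (.single (.bot ::ₘ Γ) Δ))
  | ew (G : Ctx) (Θ Λ : Multiset Formula) (d : Dir) (Γ Δ : Multiset Formula) :
      Deriv (plug G (.single Θ Λ)) →
      Deriv (plug (G ++ [(Θ, Λ, d)]) (.single Γ Δ))
  | impR (G : Ctx) (Γ Δ : Multiset Formula) (A B : Formula) :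
      Deriv (plug G (.single (A ::ₘ Γ) (B ::ₘ A.imp B ::ₘ Δ))) →
      Deriv (plug G (.single Γ (A.imp B ::ₘ Δ)))
  | impL (G : Ctx) (Γ Δ : Multiset Formula) (A B : Formula) :
      Deriv (plug G (.single (B ::ₘ A.imp B ::ₘ Γ) Δ)) →
      Deriv (plug G (.single (A.imp B ::ₘ Γ) (A ::ₘ Δ))) →
      Deriv (plug G (.single (A.imp B ::ₘ Γ) Δ))
  | boxR1 (G : Ctx) (Γ Δ Θ Λ : Multiset Formula) (A : Formula) :
      Deriv (plug G (.dn Γ (A ::ₘ Δ) (.single Θ (A.box ::ₘ Λ)))) →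
      Deriv (plug G (.dn Γ Δ (.up Θ (A.box ::ₘ Λ) (.single 0 {A})))) →
      Deriv (plug G (.dn Γ Δ (.single Θ (A.box ::ₘ Λ))))
  | bboxR1 (G : Ctx) (Γ Δ Θ Λ : Multiset Formula) (A : Formula) :
      Deriv (plug G (.up Γ (A ::ₘ Δ) (.single Θ (A.bbox ::ₘ Λ)))) →
      Deriv (plug G (.up Γ Δ (.dn Θ (A.bbox ::ₘ Λ) (.single 0 {A})))) →
      Deriv (plug G (.up Γ Δ (.single Θ (A.bbox ::ₘ Λ))))
  | boxR2 (G : Ctx) (Γ Δ : Multiset Formula) (A : Formula) :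
      lastDir G ≠ some Dir.dn →
      Deriv (plug G (.up Γ (A.box ::ₘ Δ) (.single 0 {A}))) →
      Deriv (plug G (.single Γ (A.box ::ₘ Δ)))
  | bboxR2 (G : Ctx) (Γ Δ : Multiset Formula) (A : Formula) :
      lastDir G ≠ some Dir.up →
      Deriv (plug G (.dn Γ (A.bbox ::ₘ Δ) (.single 0 {A}))) →
      Deriv (plug G (.single Γ (A.bbox ::ₘ Δ)))
  | boxL1 (G : Ctx) (Γ Δ Θ Λ : Multiset Formula) (A : Formula) :
      Deriv (plug G (.up (A.box ::ₘ Γ) Δ (.single (A ::ₘ Θ) Λ))) →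
      Deriv (plug G (.up (A.box ::ₘ Γ) Δ (.single Θ Λ)))
  | bboxL1 (G : Ctx) (Γ Δ Θ Λ : Multiset Formula) (A : Formula) :
      Deriv (plug G (.dn (A.bbox ::ₘ Γ) Δ (.single (A ::ₘ Θ) Λ))) →
      Deriv (plug G (.dn (A.bbox ::ₘ Γ) Δ (.single Θ Λ)))
  | boxL2 (G : Ctx) (Γ Δ Θ Λ : Multiset Formula) (A : Formula) :
      Deriv (plug G (.single (A ::ₘ Γ) Δ)) →
      Deriv (plug G (.dn Γ Δ (.single (A.box ::ₘ Θ) Λ)))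
  | bboxL2 (G : Ctx) (Γ Δ Θ Λ : Multiset Formula) (A : Formula) :
      Deriv (plug G (.single (A ::ₘ Γ) Δ)) →
      Deriv (plug G (.up Γ Δ (.single (A.bbox ::ₘ Θ) Λ)))

/-- A trailing context: a list of components, each preceded by the structural
connective joining it to what comes before. -/
abbrev TCtx := List (Dir × Multiset Formula × Multiset Formula)

/-- `withTail Γ Δ H` is the linear nested sequent `(Γ ⇒ Δ) ⇗ H`. -/
def withTail : Multiset Formula → Multiset Formula → TCtx → LNS
  | Γ, Δ, [] => .single Γ Δ
  | Γ, Δ, (Dir.up, Θ, Λ) :: H => .up Γ Δ (withTail Θ Λ H)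
  | Γ, Δ, (Dir.dn, Θ, Λ) :: H => .dn Γ Δ (withTail Θ Λ H)

/-! Weakening a linear nested sequent componentwise (`LNS.Le`) preserves derivability, by
induction on the derivation: weakening the components of the conclusion of a rule instance
gives another instance of the same rule, whose premises are the correspondingly weakened
premises, and the fresh component `ε ⇒ A` of the (□_R)/(■_R) premises stays as it is. The
only rules that look beyond the shape of their conclusion are (EW), whose premise must
weaken the last component of the context too, and (□_R^2)/(■_R^2), whose side condition on
the last connective of the context is unaffected by weakening. -/

theorem Multiset.exists_cons_of_cons_le {α : Type*} {a : α} {s t : Multiset α}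
    (h : a ::ₘ s ≤ t) : ∃ u, t = a ::ₘ u ∧ s ≤ u := by
  obtain ⟨v, rfl⟩ := Multiset.le_iff_exists_add.mp h
  exact ⟨s + v, Multiset.cons_add a s v, Multiset.le_add_right s v⟩

inductive LNS.Le : LNS → LNS → Prop
  | single {Γ Δ Γ' Δ' : Multiset Formula} :
      Γ ≤ Γ' → Δ ≤ Δ' → LNS.Le (.single Γ Δ) (.single Γ' Δ')
  | up {Γ Δ Γ' Δ' : Multiset Formula} {S S' : LNS} :
      Γ ≤ Γ' → Δ ≤ Δ' → LNS.Le S S' → LNS.Le (.up Γ Δ S) (.up Γ' Δ' S')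
  | dn {Γ Δ Γ' Δ' : Multiset Formula} {S S' : LNS} :
      Γ ≤ Γ' → Δ ≤ Δ' → LNS.Le S S' → LNS.Le (.dn Γ Δ S) (.dn Γ' Δ' S')

inductive Ctx.Le : Ctx → Ctx → Prop
  | nil : Ctx.Le [] []
  | cons {Γ Δ Γ' Δ' : Multiset Formula} {d : Dir} {G G' : Ctx} :
      Γ ≤ Γ' → Δ ≤ Δ' → Ctx.Le G G' → Ctx.Le ((Γ, Δ, d) :: G) ((Γ', Δ', d) :: G')

theorem LNS.Le.refl : ∀ S : LNS, LNS.Le S S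
  | .single _ _ => .single le_rfl le_rfl
  | .up _ _ S => .up le_rfl le_rfl (LNS.Le.refl S)
  | .dn _ _ S => .dn le_rfl le_rfl (LNS.Le.refl S)

theorem Ctx.Le.refl : ∀ G : Ctx, Ctx.Le G G
  | [] => .nil
  | _ :: G => .cons le_rfl le_rfl (Ctx.Le.refl G)

theorem Ctx.Le.plug {G G' : Ctx} {S S' : LNS} (hG : Ctx.Le G G') (hS : LNS.Le S S') :
    LNS.Le (plug G S) (plug G' S') := by
  induction hG with
  | nil => exact hS
  | @cons _ _ _ _ d _ _ hΓ hΔ _ ih => cases d <;> [exact .up hΓ hΔ ih; exact .dn hΓ hΔ ih]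

theorem LNS.Le.exists_of_plug {G : Ctx} {S T : LNS} (h : LNS.Le (plug G S) T) :
    ∃ G' S', Ctx.Le G G' ∧ LNS.Le S S' ∧ T = plug G' S' := by
  induction G generalizing T with
  | nil => exact ⟨[], T, .nil, h, rfl⟩
  | cons x G ih =>
    obtain ⟨Γ, Δ, d⟩ := x
    cases d
    all_goals
      obtain _ | ⟨hΓ, hΔ, h⟩ | ⟨hΓ, hΔ, h⟩ := h
      obtain ⟨G', S', hG, hS, rfl⟩ := ih h
      exact ⟨_ :: G', S', .cons hΓ hΔ hG, hS, rfl⟩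

theorem LNS.Le.withTail {Γ Δ Γ' Δ' : Multiset Formula} (hΓ : Γ ≤ Γ') (hΔ : Δ ≤ Δ') :
    ∀ H : TCtx, LNS.Le (withTail Γ Δ H) (withTail Γ' Δ' H)
  | [] => .single hΓ hΔ
  | (.up, _, _) :: _ => .up hΓ hΔ (.refl _)
  | (.dn, _, _) :: _ => .dn hΓ hΔ (.refl _)

theorem Ctx.Le.lastDir_eq {G G' : Ctx} (h : Ctx.Le G G') : lastDir G' = lastDir G := by
  induction h with
  | nil => rfl
  | cons _ _ hG ih => cases hG <;> [rfl; exact ih]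

theorem Ctx.Le.exists_of_append_singleton {G G'' : Ctx} {Θ Λ : Multiset Formula} {d : Dir}
    (h : Ctx.Le (G ++ [(Θ, Λ, d)]) G'') :
    ∃ G' Θ' Λ', G'' = G' ++ [(Θ', Λ', d)] ∧ Ctx.Le G G' ∧ Θ ≤ Θ' ∧ Λ ≤ Λ' := by
  induction G generalizing G'' with
  | nil =>
    obtain _ | ⟨hΘ, hΛ, _ | _⟩ := h
    exact ⟨[], _, _, rfl, .nil, hΘ, hΛ⟩
  | cons x G ih =>
    obtain _ | ⟨hΓ, hΔ, h⟩ := h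
    obtain ⟨G', Θ', Λ', rfl, hG, hΘ, hΛ⟩ := ih h
    exact ⟨_ :: G', Θ', Λ', rfl, .cons hΓ hΔ hG, hΘ, hΛ⟩

open Multiset in
theorem Deriv.of_le {S T : LNS} (hS : Deriv S) (hST : LNS.Le S T) : Deriv T := by
  induction hS generalizing T with
  | id G Γ Δ p =>
    obtain ⟨G', _, -, ⟨hΓ, hΔ⟩ | _ | _, rfl⟩ := hST.exists_of_plug
    obtain ⟨Γ', rfl, -⟩ := exists_cons_of_cons_le hΓ
    obtain ⟨Δ', rfl, -⟩ := exists_cons_of_cons_le hΔ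
    exact .id G' Γ' Δ' p
  | botL G Γ Δ =>
    obtain ⟨G', _, -, ⟨hΓ, -⟩ | _ | _, rfl⟩ := hST.exists_of_plug
    obtain ⟨Γ', rfl, -⟩ := exists_cons_of_cons_le hΓ
    exact .botL G' Γ' _
  | ew G Θ Λ d Γ Δ _ ih =>
    obtain ⟨G'', _, hG'', ⟨-, -⟩ | _ | _, rfl⟩ := hST.exists_of_plug
    obtain ⟨G', Θ', Λ', rfl, hG, hΘ, hΛ⟩ := hG''.exists_of_append_singleton
    exact .ew G' Θ' Λ' d _ _ (ih (hG.plug (.single hΘ hΛ)))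
  | impR G Γ Δ A B _ ih =>
    obtain ⟨G', _, hG, ⟨hΓ, hΔ⟩ | _ | _, rfl⟩ := hST.exists_of_plug
    obtain ⟨Δ', rfl, -⟩ := exists_cons_of_cons_le hΔ
    exact .impR G' _ Δ' A B
      (ih (hG.plug (.single (cons_le_cons _ hΓ) (cons_le_cons _ hΔ))))
  | impL G Γ Δ A B _ _ ih₁ ih₂ =>
    obtain ⟨G', _, hG, ⟨hΓ, hΔ⟩ | _ | _, rfl⟩ := hST.exists_of_plug
    obtain ⟨Γ', rfl, -⟩ := exists_cons_of_cons_le hΓ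
    exact .impL G' Γ' _ A B
      (ih₁ (hG.plug (.single (cons_le_cons _ hΓ) hΔ)))
      (ih₂ (hG.plug (.single hΓ (cons_le_cons _ hΔ))))
  | boxR1 G Γ Δ Θ Λ A _ _ ih₁ ih₂ =>
    obtain ⟨G', _, hG, _ | _ | ⟨hΓ, hΔ, ⟨hΘ, hΛ⟩ | _ | _⟩, rfl⟩ :=
      hST.exists_of_plug
    obtain ⟨Λ', rfl, -⟩ := exists_cons_of_cons_le hΛ
    exact .boxR1 G' _ _ _ Λ' A
      (ih₁ (hG.plug (.dn hΓ (cons_le_cons _ hΔ) (.single hΘ hΛ))))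
      (ih₂ (hG.plug (.dn hΓ hΔ (.up hΘ hΛ (.refl _)))))
  | bboxR1 G Γ Δ Θ Λ A _ _ ih₁ ih₂ =>
    obtain ⟨G', _, hG, _ | ⟨hΓ, hΔ, ⟨hΘ, hΛ⟩ | _ | _⟩ | _, rfl⟩ :=
      hST.exists_of_plug
    obtain ⟨Λ', rfl, -⟩ := exists_cons_of_cons_le hΛ
    exact .bboxR1 G' _ _ _ Λ' A
      (ih₁ (hG.plug (.up hΓ (cons_le_cons _ hΔ) (.single hΘ hΛ))))
      (ih₂ (hG.plug (.up hΓ hΔ (.dn hΘ hΛ (.refl _)))))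
  | boxR2 G Γ Δ A hG _ ih =>
    obtain ⟨G', _, hG', ⟨hΓ, hΔ⟩ | _ | _, rfl⟩ := hST.exists_of_plug
    obtain ⟨Δ', rfl, -⟩ := exists_cons_of_cons_le hΔ
    exact .boxR2 G' _ Δ' A (hG'.lastDir_eq ▸ hG)
      (ih (hG'.plug (.up hΓ hΔ (.refl _))))
  | bboxR2 G Γ Δ A hG _ ih =>
    obtain ⟨G', _, hG', ⟨hΓ, hΔ⟩ | _ | _, rfl⟩ := hST.exists_of_plug
    obtain ⟨Δ', rfl, -⟩ := exists_cons_of_cons_le hΔ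
    exact .bboxR2 G' _ Δ' A (hG'.lastDir_eq ▸ hG)
      (ih (hG'.plug (.dn hΓ hΔ (.refl _))))
  | boxL1 G Γ Δ Θ Λ A _ ih =>
    obtain ⟨G', _, hG, _ | ⟨hΓ, hΔ, ⟨hΘ, hΛ⟩ | _ | _⟩ | _, rfl⟩ :=
      hST.exists_of_plug
    obtain ⟨Γ', rfl, -⟩ := exists_cons_of_cons_le hΓ
    exact .boxL1 G' Γ' _ _ _ A
      (ih (hG.plug (.up hΓ hΔ (.single (cons_le_cons _ hΘ) hΛ))))
  | bboxL1 G Γ Δ Θ Λ A _ ih =>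
    obtain ⟨G', _, hG, _ | _ | ⟨hΓ, hΔ, ⟨hΘ, hΛ⟩ | _ | _⟩, rfl⟩ :=
      hST.exists_of_plug
    obtain ⟨Γ', rfl, -⟩ := exists_cons_of_cons_le hΓ
    exact .bboxL1 G' Γ' _ _ _ A
      (ih (hG.plug (.dn hΓ hΔ (.single (cons_le_cons _ hΘ) hΛ))))
  | boxL2 G Γ Δ Θ Λ A _ ih =>
    obtain ⟨G', _, hG, _ | _ | ⟨hΓ, hΔ, ⟨hΘ, -⟩ | _ | _⟩, rfl⟩ := hST.exists_of_plug
    obtain ⟨Θ', rfl, -⟩ := exists_cons_of_cons_le hΘ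
    exact .boxL2 G' _ _ Θ' _ A (ih (hG.plug (.single (cons_le_cons _ hΓ) hΔ)))
  | bboxL2 G Γ Δ Θ Λ A _ ih =>
    obtain ⟨G', _, hG, _ | ⟨hΓ, hΔ, ⟨hΘ, -⟩ | _ | _⟩ | _, rfl⟩ := hST.exists_of_plug
    obtain ⟨Θ', rfl, -⟩ := exists_cons_of_cons_le hΘ
    exact .bboxL2 G' _ _ Θ' _ A (ih (hG.plug (.single (cons_le_cons _ hΓ) hΔ)))

/-- Admissibility of internal weakening in LNS_Kt. -/
theorem weakening_admissible (G : Ctx) (H : TCtx) (Γ Δ Θ Λ : Multiset Formula)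
    (h : Deriv (plug G (withTail Γ Δ H))) :
    Deriv (plug G (withTail (Γ + Θ) (Δ + Λ) H)) :=
  h.of_le <| (Ctx.Le.refl G).plug <|
    .withTail (Multiset.le_add_right Γ Θ) (Multiset.le_add_right Δ Λ) H
end
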